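/- arXiv:2101.01809 — 2 statements merged into one kernel-verified Lean document; each statement's English description precedes it below -/
import Mathlib

section
/- Let S be a graded weakly system in a G-graded ring R, and let P be a graded ideal of R that is maximal (under inclusion) among graded ideals of R disjoint from S. Then P is a graded weakly prime ideal of R. -/
/-!
If neither `I` nor `J` lies in `P`, maximality of `P` forces the graded ideals `P + I` and
`P + J` to meet `S`. Their product contains `IJ ≠ 0`, and expanding `(p + i)(q + j)` shows it
lies in `P` whenever `IJ` does, so the weakly system property yields a point of `S` in `P`.
-/

/-- The additive subgroup generated by all products `a * b` with `a ∈ S`, `b ∈ T`.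
For two-sided ideals `I`, `J`, `mulClosure I J` is the ideal product `IJ`. -/
def mulClosure {R : Type*} [NonUnitalRing R] (S T : Set R) : AddSubgroup R :=
  AddSubgroup.closure {x | ∃ a ∈ S, ∃ b ∈ T, a * b = x}

/-- A two-sided ideal of a `G`-graded ring is graded if every homogeneous component of
every element of the ideal lies in the ideal. -/
def IsGradedIdeal {G R : Type*} [DecidableEq G] [NonUnitalRing R]
    (𝒜 : G → AddSubgroup R) [DirectSum.Decomposition 𝒜] (P : TwoSidedIdeal R) : Prop :=
  ∀ x ∈ P, ∀ g : G, (DirectSum.decompose 𝒜 x g : R) ∈ P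

/-- A proper graded ideal `P` is graded weakly prime if `0 ≠ IJ ⊆ P` implies `I ⊆ P` or
`J ⊆ P` for all graded ideals `I`, `J`. -/
def IsGradedWeaklyPrime {G R : Type*} [DecidableEq G] [NonUnitalRing R]
    (𝒜 : G → AddSubgroup R) [DirectSum.Decomposition 𝒜] (P : TwoSidedIdeal R) : Prop :=
  P ≠ ⊤ ∧ IsGradedIdeal 𝒜 P ∧
    ∀ I J : TwoSidedIdeal R, IsGradedIdeal 𝒜 I → IsGradedIdeal 𝒜 J →
      mulClosure (I : Set R) (J : Set R) ≠ ⊥ →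
      (mulClosure (I : Set R) (J : Set R) : Set R) ⊆ (P : Set R) → I ≤ P ∨ J ≤ P

/-- A nonempty set `S` of nonzero homogeneous elements is a graded weakly system if for
all graded ideals `I`, `J` with `I ∩ S ≠ ∅`, `J ∩ S ≠ ∅` and `IJ ≠ 0`, one has
`IJ ∩ S ≠ ∅`. -/
def IsGradedWeaklySystem {G R : Type*} [DecidableEq G] [NonUnitalRing R]
    (𝒜 : G → AddSubgroup R) [DirectSum.Decomposition 𝒜] (S : Set R) : Prop :=
  S.Nonempty ∧ (∀ s ∈ S, SetLike.IsHomogeneousElem 𝒜 s) ∧ (0 : R) ∉ S ∧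
    ∀ I J : TwoSidedIdeal R, IsGradedIdeal 𝒜 I → IsGradedIdeal 𝒜 J →
      ((I : Set R) ∩ S).Nonempty → ((J : Set R) ∩ S).Nonempty →
      mulClosure (I : Set R) (J : Set R) ≠ ⊥ →
      ((mulClosure (I : Set R) (J : Set R) : Set R) ∩ S).Nonempty

lemma isGradedIdeal_sup {G R : Type*} [DecidableEq G] [NonUnitalRing R]
    (𝒜 : G → AddSubgroup R) [DirectSum.Decomposition 𝒜] {I J : TwoSidedIdeal R}
    (hI : IsGradedIdeal 𝒜 I) (hJ : IsGradedIdeal 𝒜 J) : IsGradedIdeal 𝒜 (I ⊔ J) := by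
  intro x hx g
  obtain ⟨y, hy, z, hz, rfl⟩ := TwoSidedIdeal.mem_sup.mp hx
  rw [DirectSum.decompose_add, DirectSum.add_apply, AddMemClass.coe_add]
  exact TwoSidedIdeal.mem_sup.mpr ⟨_, hI y hy g, _, hJ z hz g, rfl⟩

section mulClosure

variable {R : Type*} [NonUnitalRing R]

lemma mulClosure_mono {s s' t t' : Set R} (hs : s ⊆ s') (ht : t ⊆ t') :
    mulClosure s t ≤ mulClosure s' t' :=
  AddSubgroup.closure_mono fun _ ⟨a, ha, b, hb, hab⟩ => ⟨a, hs ha, b, ht hb, hab⟩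

lemma coe_mulClosure_subset {s t : Set R} {P : TwoSidedIdeal R}
    (h : ∀ a ∈ s, ∀ b ∈ t, a * b ∈ P) : (mulClosure s t : Set R) ⊆ P :=
  (AddSubgroup.closure_le (K := AddSubgroup.ofClass P)).mpr
    fun _ ⟨a, ha, b, hb, hab⟩ => hab ▸ h a ha b hb

lemma coe_mulClosure_sup_subset {P I J : TwoSidedIdeal R}
    (h : (mulClosure (I : Set R) (J : Set R) : Set R) ⊆ P) :
    (mulClosure ((P ⊔ I : TwoSidedIdeal R) : Set R) ((P ⊔ J : TwoSidedIdeal R) : Set R) :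
      Set R) ⊆ P := by
  refine coe_mulClosure_subset fun a ha b hb => ?_
  obtain ⟨p, hp, i, hi, rfl⟩ := TwoSidedIdeal.mem_sup.mp ha
  obtain ⟨q, hq, j, hj, rfl⟩ := TwoSidedIdeal.mem_sup.mp hb
  have hij : i * j ∈ P := h (AddSubgroup.subset_closure ⟨i, hi, j, hj, rfl⟩)
  rw [add_mul, mul_add, mul_add]
  exact add_mem (add_mem (P.mul_mem_right _ _ hp) (P.mul_mem_right _ _ hp))
    (add_mem (P.mul_mem_left _ _ hq) hij)

end mulClosure

lemma inter_sup_nonempty_of_maximal {G R : Type*} [DecidableEq G] [NonUnitalRing R]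
    {𝒜 : G → AddSubgroup R} [DirectSum.Decomposition 𝒜] {S : Set R} {P I : TwoSidedIdeal R}
    (hP : IsGradedIdeal 𝒜 P)
    (hmax : ∀ Q : TwoSidedIdeal R, IsGradedIdeal 𝒜 Q → (Q : Set R) ∩ S = ∅ → P ≤ Q →
      P = Q)
    (hI : IsGradedIdeal 𝒜 I) (hIP : ¬ I ≤ P) :
    (((P ⊔ I : TwoSidedIdeal R) : Set R) ∩ S).Nonempty := by
  rw [Set.nonempty_iff_ne_empty]
  intro hempty
  exact hIP ((hmax _ (isGradedIdeal_sup 𝒜 hP hI) hempty le_sup_left).symm ▸ le_sup_right)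

theorem stmt_10_general {G R : Type*} [DecidableEq G] [NonUnitalRing R]
    (𝒜 : G → AddSubgroup R) [DirectSum.Decomposition 𝒜]
    (S : Set R) (hS : IsGradedWeaklySystem 𝒜 S)
    (P : TwoSidedIdeal R) (hP : IsGradedIdeal 𝒜 P) (hdisj : (P : Set R) ∩ S = ∅)
    (hmax : ∀ Q : TwoSidedIdeal R, IsGradedIdeal 𝒜 Q → (Q : Set R) ∩ S = ∅ → P ≤ Q →
      P = Q) :
    IsGradedWeaklyPrime 𝒜 P := by
  obtain ⟨⟨s, hs⟩, -, -, hsystem⟩ := hS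
  refine ⟨fun htop => hdisj.subset ⟨by simp [htop], hs⟩, hP, ?_⟩
  intro I J hI hJ hIJ hIJP
  by_contra! ⟨hIP, hJP⟩
  have hne : mulClosure ((P ⊔ I : TwoSidedIdeal R) : Set R) ((P ⊔ J : TwoSidedIdeal R) : Set R)
      ≠ ⊥ :=
    ne_bot_of_le_ne_bot hIJ (mulClosure_mono (SetLike.coe_subset_coe.mpr le_sup_right)
      (SetLike.coe_subset_coe.mpr le_sup_right))
  obtain ⟨x, hxP, hxS⟩ := hsystem _ _ (isGradedIdeal_sup 𝒜 hP hI) (isGradedIdeal_sup 𝒜 hP hJ)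
    (inter_sup_nonempty_of_maximal hP hmax hI hIP) (inter_sup_nonempty_of_maximal hP hmax hJ hJP)
    hne
  exact hdisj.subset ⟨coe_mulClosure_sup_subset hIJP hxP, hxS⟩

/-- Let `S` be a graded weakly system and `P` a graded ideal maximal among graded ideals
disjoint from `S`. Then `P` is a graded weakly prime ideal. -/
theorem stmt_10 {G R : Type*} [Group G] [DecidableEq G] [NonUnitalRing R]
    (𝒜 : G → AddSubgroup R) [DirectSum.Decomposition 𝒜]
    (hmul : ∀ ⦃g h : G⦄ ⦃x y : R⦄, x ∈ 𝒜 g → y ∈ 𝒜 h → x * y ∈ 𝒜 (g * h))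
    (S : Set R) (hS : IsGradedWeaklySystem 𝒜 S)
    (P : TwoSidedIdeal R) (hP : IsGradedIdeal 𝒜 P) (hdisj : (P : Set R) ∩ S = ∅)
    (hmax : ∀ Q : TwoSidedIdeal R, IsGradedIdeal 𝒜 Q → (Q : Set R) ∩ S = ∅ → P ≤ Q →
      P = Q) :
    IsGradedWeaklyPrime 𝒜 P :=
  stmt_10_general 𝒜 S hS P hP hdisj hmax
end

section
/- Let I be a graded ideal of a G-graded ring R and suppose some graded weakly prime ideal of R contains I. Then GW(I) = {a ∈ h(R) : every graded weakly system containing a meets I} equals the set of homogeneous elements of the intersection of all graded weakly prime ideals of R containing I; that is, for a ∈ h(R), a ∈ GW(I) if and only if a belongs to every graded weakly prime ideal of R containing I. -/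
/-!
If `P` is graded weakly prime, the nonzero homogeneous elements outside `P` form a graded weakly
system: a product `IJ` of graded ideals is again closed under taking homogeneous components, so
`IJ ⊆ P` as soon as no homogeneous element of `IJ` escapes `P`. Conversely, if a graded weakly
system `S` misses `I`, Zorn's lemma gives a graded ideal `M ⊇ I` maximal among those missing `S`.
For graded `I', J' ⊄ M` the ideals `M + I'` and `M + J'` meet `S`, and
`(M + I')(M + J') ⊆ M + I'J'`; so `0 ≠ I'J' ⊆ M` would make `S` meet `M`. Hence `M` is graded
weakly prime, and it avoids every element of `S`.
-/

open DirectSum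

theorem TwoSidedIdeal.mem_sSup_of_isChain {R : Type*} [NonUnitalNonAssocRing R]
    {c : Set (TwoSidedIdeal R)} (hc : IsChain (· ≤ ·) c) (hne : c.Nonempty) {x : R} :
    x ∈ sSup c ↔ ∃ J ∈ c, x ∈ J := by
  refine ⟨fun hx => ?_, fun ⟨J, hJc, hxJ⟩ => le_sSup hJc hxJ⟩
  let U : TwoSidedIdeal R := .mk' (⋃ J ∈ c, (J : Set R))
    (Set.mem_biUnion hne.some_mem (zero_mem _))
    (fun hx hy => by
      obtain ⟨J, hJc, hxJ⟩ := Set.mem_iUnion₂.mp hx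
      obtain ⟨K, hKc, hyK⟩ := Set.mem_iUnion₂.mp hy
      rcases hc.total hJc hKc with hJK | hKJ
      · exact Set.mem_biUnion hKc (K.add_mem (hJK hxJ) hyK)
      · exact Set.mem_biUnion hJc (J.add_mem hxJ (hKJ hyK)))
    (fun hx => by
      obtain ⟨J, hJc, hxJ⟩ := Set.mem_iUnion₂.mp hx
      exact Set.mem_biUnion hJc (J.neg_mem hxJ))
    (fun hy => by
      obtain ⟨J, hJc, hyJ⟩ := Set.mem_iUnion₂.mp hy
      exact Set.mem_biUnion hJc (J.mul_mem_left _ _ hyJ))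
    (fun hx => by
      obtain ⟨J, hJc, hxJ⟩ := Set.mem_iUnion₂.mp hx
      exact Set.mem_biUnion hJc (J.mul_mem_right _ _ hxJ))
  have hU : sSup c ≤ U := sSup_le fun J hJc y hy =>
    (TwoSidedIdeal.mem_mk' ..).mpr (Set.mem_biUnion hJc hy)
  simpa [U] using hU hx

theorem coe_mulClosure_subset_iff {R : Type*} [NonUnitalRing R] {S T : Set R}
    {P : TwoSidedIdeal R} : (mulClosure S T : Set R) ⊆ P ↔ ∀ a ∈ S, ∀ b ∈ T, a * b ∈ P := by
  refine ⟨fun h a ha b hb => h (AddSubgroup.subset_closure ⟨a, ha, b, hb, rfl⟩),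
    fun h x hx => ?_⟩
  induction hx using AddSubgroup.closure_induction with
  | mem _ hx =>
    obtain ⟨a, ha, b, hb, rfl⟩ := hx
    exact h a ha b hb
  | zero => exact zero_mem P
  | add _ _ _ _ hx hy => exact add_mem hx hy
  | neg _ _ hx => exact neg_mem hx

theorem mulClosure_mono_s11 {R : Type*} [NonUnitalRing R] {S S' T T' : Set R} (hS : S ⊆ S')
    (hT : T ⊆ T') : mulClosure S T ≤ mulClosure S' T' :=
  AddSubgroup.closure_mono fun _ ⟨a, ha, b, hb, hab⟩ => ⟨a, hS ha, b, hT hb, hab⟩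

theorem mulClosure_sup_subset {R : Type*} [NonUnitalRing R] {M I J : TwoSidedIdeal R}
    (h : (mulClosure (I : Set R) J : Set R) ⊆ M) :
    (mulClosure ((M ⊔ I : TwoSidedIdeal R) : Set R) (M ⊔ J : TwoSidedIdeal R) : Set R) ⊆ M := by
  rw [coe_mulClosure_subset_iff] at h ⊢
  intro a ha b hb
  obtain ⟨p, hp, q, hq, rfl⟩ := TwoSidedIdeal.mem_sup.mp ha
  obtain ⟨p', hp', q', hq', rfl⟩ := TwoSidedIdeal.mem_sup.mp hb
  rw [add_mul, mul_add q]
  exact add_mem (M.mul_mem_right _ _ hp) (add_mem (M.mul_mem_left _ _ hp') (h q hq q' hq'))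

section Graded

variable {G R : Type*} [DecidableEq G] [NonUnitalRing R] (𝒜 : G → AddSubgroup R)
  [Decomposition 𝒜]

def componentsIn (A : AddSubgroup R) : AddSubgroup R where
  carrier := {x | ∀ g, (decompose 𝒜 x g : R) ∈ A}
  zero_mem' g := by simp
  add_mem' hx hy g := by simpa using A.add_mem (hx g) (hy g)
  neg_mem' {x} hx g := by
    rw [decompose_neg, DFinsupp.neg_apply, AddSubgroup.coe_neg]
    exact A.neg_mem (hx g)

variable {𝒜}

theorem mem_componentsIn_of_isHomogeneousElem {A : AddSubgroup R} {x : R} (hxA : x ∈ A)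
    (hx : SetLike.IsHomogeneousElem 𝒜 x) : x ∈ componentsIn 𝒜 A := by
  obtain ⟨m, hm⟩ := hx
  intro g
  by_cases hmg : m = g
  · subst hmg
    rwa [decompose_of_mem_same 𝒜 hm]
  · rw [decompose_of_mem_ne 𝒜 hm hmg]
    exact A.zero_mem

theorem mem_of_forall_decompose_mem {σ : Type*} [SetLike σ R] [AddSubmonoidClass σ R] {A : σ}
    {x : R} (h : ∀ g, (decompose 𝒜 x g : R) ∈ A) : x ∈ A := by
  classical
  rw [← sum_support_decompose 𝒜 x]
  exact sum_mem fun g _ => h g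

theorem mulClosure_le_componentsIn [Mul G]
    (hmul : ∀ ⦃g h : G⦄ ⦃x y : R⦄, x ∈ 𝒜 g → y ∈ 𝒜 h → x * y ∈ 𝒜 (g * h))
    {I J : TwoSidedIdeal R} (hI : IsGradedIdeal 𝒜 I) (hJ : IsGradedIdeal 𝒜 J) :
    mulClosure (I : Set R) J ≤ componentsIn 𝒜 (mulClosure (I : Set R) J) := by
  classical
  rw [mulClosure, AddSubgroup.closure_le]
  rintro _ ⟨a, ha, b, hb, rfl⟩
  rw [← sum_support_decompose 𝒜 a, ← sum_support_decompose 𝒜 b, Finset.sum_mul_sum]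
  refine sum_mem fun i _ => sum_mem fun j _ => mem_componentsIn_of_isHomogeneousElem ?_
    ⟨i * j, hmul (SetLike.coe_mem _) (SetLike.coe_mem _)⟩
  exact AddSubgroup.subset_closure ⟨_, hI a ha i, _, hJ b hb j, rfl⟩

theorem IsGradedIdeal.sup {I J : TwoSidedIdeal R} (hI : IsGradedIdeal 𝒜 I)
    (hJ : IsGradedIdeal 𝒜 J) : IsGradedIdeal 𝒜 (I ⊔ J) := by
  intro x hx g
  obtain ⟨y, hy, z, hz, rfl⟩ := TwoSidedIdeal.mem_sup.mp hx
  rw [decompose_add, DirectSum.add_apply, AddSubgroup.coe_add]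
  exact TwoSidedIdeal.mem_sup.mpr ⟨_, hI y hy g, _, hJ z hz g, rfl⟩

theorem exists_isHomogeneousElem_notMem {σ : Type*} [SetLike σ R] [AddSubmonoidClass σ R]
    {A : σ} {x : R} (hx : x ∉ A) : ∃ s, SetLike.IsHomogeneousElem 𝒜 s ∧ s ∉ A := by
  obtain ⟨g, hg⟩ : ∃ g, (decompose 𝒜 x g : R) ∉ A := by
    by_contra! h
    exact hx (mem_of_forall_decompose_mem h)
  exact ⟨_, ⟨g, SetLike.coe_mem _⟩, hg⟩

theorem IsGradedWeaklyPrime.isGradedWeaklySystem_compl [Mul G]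
    (hmul : ∀ ⦃g h : G⦄ ⦃x y : R⦄, x ∈ 𝒜 g → y ∈ 𝒜 h → x * y ∈ 𝒜 (g * h))
    {P : TwoSidedIdeal R} (hP : IsGradedWeaklyPrime 𝒜 P) :
    IsGradedWeaklySystem 𝒜 {s | SetLike.IsHomogeneousElem 𝒜 s ∧ s ∉ P} := by
  obtain ⟨hPtop, hPgr, hPprime⟩ := hP
  obtain ⟨x, hx⟩ := SetLike.exists_not_mem_of_ne_top P hPtop
  refine ⟨exists_isHomogeneousElem_notMem hx, fun s hs => hs.1, fun h => h.2 P.zero_mem,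
    fun I J hI hJ hIS hJS hIJ => ?_⟩
  by_contra hempty
  have hIJP : (mulClosure (I : Set R) J : Set R) ⊆ P := fun x hx =>
    mem_of_forall_decompose_mem fun g => by
      by_contra hg
      exact hempty ⟨_, mulClosure_le_componentsIn hmul hI hJ hx g, ⟨g, SetLike.coe_mem _⟩, hg⟩
  rcases hPprime I J hI hJ hIJ hIJP with hIP | hJP
  · obtain ⟨s, hsI, -, hsP⟩ := hIS
    exact hsP (hIP hsI)
  · obtain ⟨s, hsJ, -, hsP⟩ := hJS
    exact hsP (hJP hsJ)

theorem exists_le_maximal_isGradedIdeal_disjoint {I : TwoSidedIdeal R} {S : Set R}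
    (hI : IsGradedIdeal 𝒜 I) (hIS : Disjoint (I : Set R) S) :
    ∃ M, I ≤ M ∧ Maximal (fun J => IsGradedIdeal 𝒜 J ∧ Disjoint (J : Set R) S) M := by
  refine zorn_le_nonempty₀ {J | IsGradedIdeal 𝒜 J ∧ Disjoint (J : Set R) S}
    (fun c hc hchain J hJ => ⟨sSup c, ⟨?_, ?_⟩, fun _ => le_sSup⟩) I ⟨hI, hIS⟩
  · intro x hx g
    obtain ⟨K, hKc, hxK⟩ := (TwoSidedIdeal.mem_sSup_of_isChain hchain ⟨J, hJ⟩).mp hx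
    exact le_sSup hKc ((hc hKc).1 x hxK g)
  · refine Set.disjoint_left.mpr fun x hx hxS => ?_
    obtain ⟨K, hKc, hxK⟩ := (TwoSidedIdeal.mem_sSup_of_isChain hchain ⟨J, hJ⟩).mp hx
    exact Set.disjoint_left.mp (hc hKc).2 hxK hxS

theorem IsGradedWeaklySystem.isGradedWeaklyPrime_of_maximal {S : Set R}
    (hS : IsGradedWeaklySystem 𝒜 S) {M : TwoSidedIdeal R}
    (hM : Maximal (fun J => IsGradedIdeal 𝒜 J ∧ Disjoint (J : Set R) S) M) :
    IsGradedWeaklyPrime 𝒜 M := by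
  obtain ⟨⟨hMgr, hMS⟩, hmax⟩ := hM
  have hmeets : ∀ K, IsGradedIdeal 𝒜 K → ¬K ≤ M →
      (((M ⊔ K : TwoSidedIdeal R) : Set R) ∩ S).Nonempty := by
    intro K hK hKM
    rw [← Set.not_disjoint_iff_nonempty_inter]
    exact fun hdisj => hKM (le_sup_right.trans (hmax ⟨hMgr.sup hK, hdisj⟩ le_sup_left))
  refine ⟨?_, hMgr, fun I J hI hJ hIJ hIJM => ?_⟩
  · rintro rfl
    obtain ⟨s, hs⟩ := hS.1
    exact Set.disjoint_left.mp hMS trivial hs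
  · by_contra! h
    have hne : mulClosure ((M ⊔ I : TwoSidedIdeal R) : Set R) (M ⊔ J : TwoSidedIdeal R) ≠ ⊥ :=
      ne_bot_of_le_ne_bot hIJ <| mulClosure_mono_s11 (SetLike.coe_subset_coe.mpr le_sup_right)
        (SetLike.coe_subset_coe.mpr le_sup_right)
    obtain ⟨z, hz, hzS⟩ := hS.2.2.2 _ _ (hMgr.sup hI) (hMgr.sup hJ) (hmeets I hI h.1)
      (hmeets J hJ h.2) hne
    exact Set.disjoint_left.mp hMS (mulClosure_sup_subset hIJM hz) hzS

end Graded

theorem stmt_11_general {G R : Type*} [Group G] [DecidableEq G] [NonUnitalRing R]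
    (𝒜 : G → AddSubgroup R) [DirectSum.Decomposition 𝒜]
    (hmul : ∀ ⦃g h : G⦄ ⦃x y : R⦄, x ∈ 𝒜 g → y ∈ 𝒜 h → x * y ∈ 𝒜 (g * h))
    (I : TwoSidedIdeal R) (hI : IsGradedIdeal 𝒜 I) :
    ∀ a : R, SetLike.IsHomogeneousElem 𝒜 a →
      ((∀ S : Set R, IsGradedWeaklySystem 𝒜 S → a ∈ S → (S ∩ (I : Set R)).Nonempty) ↔
        ∀ P : TwoSidedIdeal R, IsGradedWeaklyPrime 𝒜 P → I ≤ P → a ∈ P) := by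
  intro a ha
  constructor
  · intro hGW P hP hIP
    by_contra haP
    obtain ⟨s, hsS, hsI⟩ := hGW _ (hP.isGradedWeaklySystem_compl hmul) ⟨ha, haP⟩
    exact hsS.2 (hIP hsI)
  · intro hall S hS haS
    by_contra hSI
    obtain ⟨M, hIM, hM⟩ := exists_le_maximal_isGradedIdeal_disjoint hI
      (Set.disjoint_left.mpr fun x hxI hxS => hSI ⟨x, hxS, hxI⟩)
    exact Set.disjoint_left.mp hM.1.2 (hall M (hS.isGradedWeaklyPrime_of_maximal hM) hIM) haS

/-- Let `I` be a graded ideal contained in some graded weakly prime ideal. Then for every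
homogeneous `a`, `a ∈ GW(I)` (every graded weakly system containing `a` meets `I`) iff `a`
belongs to every graded weakly prime ideal containing `I`. -/
theorem stmt_11 {G R : Type*} [Group G] [DecidableEq G] [NonUnitalRing R]
    (𝒜 : G → AddSubgroup R) [DirectSum.Decomposition 𝒜]
    (hmul : ∀ ⦃g h : G⦄ ⦃x y : R⦄, x ∈ 𝒜 g → y ∈ 𝒜 h → x * y ∈ 𝒜 (g * h))
    (I : TwoSidedIdeal R) (hI : IsGradedIdeal 𝒜 I)
    (hex : ∃ P : TwoSidedIdeal R, IsGradedWeaklyPrime 𝒜 P ∧ I ≤ P) :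
    ∀ a : R, SetLike.IsHomogeneousElem 𝒜 a →
      ((∀ S : Set R, IsGradedWeaklySystem 𝒜 S → a ∈ S → (S ∩ (I : Set R)).Nonempty) ↔
        ∀ P : TwoSidedIdeal R, IsGradedWeaklyPrime 𝒜 P → I ≤ P → a ∈ P) :=
  stmt_11_general 𝒜 hmul I hI
end
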